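/- arXiv:math/0607756 — 3 statements merged into one kernel-verified Lean document; each statement's English description precedes it below -/
import Mathlib

section
/- Let 1 ≤ k ≤ n and let ω be a nonnegative, decomposable, normalized element of Λᵏ(ℝⁿ). Then there exist a nonzero, nonnegative, decomposable element η of Λᵏ⁻¹(ℝⁿ) and a vector v ∈ ℝⁿ such that v ∧ η = ω. -/
open ExteriorAlgebra

noncomputable section

/-- The basis `k`-vector `e_A`, the wedge of the standard basis vectors indexed by `A`
in increasing order. -/
def eWedge (n : ℕ) (A : Finset (Fin n)) : ExteriorAlgebra ℝ (Fin n → ℝ) :=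
  ((A.sort (· ≤ ·)).map fun i => ι ℝ (Pi.single i (1 : ℝ))).prod

/-- `ω ∈ Λᵏ(ℝⁿ)` has coordinates `c` with respect to the basis `{e_A}`. -/
def HasCoords {n k : ℕ} (ω : ⋀[ℝ]^k (Fin n → ℝ))
    (c : {A : Finset (Fin n) // A.card = k} → ℝ) : Prop :=
  (ω : ExteriorAlgebra ℝ (Fin n → ℝ)) =
    ∑ A : {A : Finset (Fin n) // A.card = k}, c A • eWedge n A.1

/-- `ω` is nonnegative: all its coordinates are nonnegative. -/
def IsNonneg {n k : ℕ} (ω : ⋀[ℝ]^k (Fin n → ℝ)) : Prop :=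
  ∃ c, HasCoords ω c ∧ ∀ A, 0 ≤ c A

/-- `ω` is positive: all its coordinates are positive. -/
def IsPositive {n k : ℕ} (ω : ⋀[ℝ]^k (Fin n → ℝ)) : Prop :=
  ∃ c, HasCoords ω c ∧ ∀ A, 0 < c A

/-- `ω` is normalized: its coordinates sum to `1`. -/
def IsNormalized {n k : ℕ} (ω : ⋀[ℝ]^k (Fin n → ℝ)) : Prop :=
  ∃ c, HasCoords ω c ∧ ∑ A, c A = 1

/-- `ω` is decomposable: it is a wedge of `k` vectors of `ℝⁿ`. -/
def IsDecomposable {n k : ℕ} (ω : ⋀[ℝ]^k (Fin n → ℝ)) : Prop :=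
  ∃ v : Fin k → (Fin n → ℝ), (ω : ExteriorAlgebra ℝ (Fin n → ℝ)) = ιMulti ℝ k v

/-!
Write `ω = u₁ ∧ ⋯ ∧ u_k` and let `a` be the largest index at which some `u_j` is nonzero.
Gaussian elimination with pivot in column `a` gives `ω = v ∧ w` with `v a ≠ 0` and
`w = w₁ ∧ ⋯ ∧ w_{k-1}`, where every `w_i` vanishes at `a` and beyond. So `w_B = 0` unless `B`
lies below `a`, and then `a` is the last element of `B ∪ {a}`: Laplace expansion along column `a`
gives `ω_{B ∪ {a}} = (-1)^(k-1) (v a) w_B`. Hence `η = (-1)^(k-1) (v a) • w` has the coordinates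
`ω_{B ∪ {a}} ≥ 0` or `0`, and `ω = ((-1)^(k-1) (v a))⁻¹ • v ∧ η`. For `k = 1` take `η = 1`
instead, since a multiple of `1 ∈ Λ⁰` is decomposable only if it is `1`.
-/

section

variable {R M : Type*} [CommRing R] [AddCommGroup M] [Module R M]

lemma ι_mul_ι_mul_anticomm (x y : M) (z : ExteriorAlgebra R M) :
    ι R x * (ι R y * z) = -(ι R y * (ι R x * z)) := by
  rw [← mul_assoc, ← mul_assoc, ← neg_mul, eq_neg_of_add_eq_zero_left (ι_add_mul_swap x y)]

lemma ι_mul_ιMulti_sub_smul (y : M) :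
    ∀ {k : ℕ} (r : Fin k → M) (d : Fin k → R),
      ι R y * ιMulti R k (fun i => r i - d i • y) = ι R y * ιMulti R k r
  | 0, _, _ => by simp
  | k + 1, r, d => by
    have htail := ι_mul_ιMulti_sub_smul y (Matrix.vecTail r) (Matrix.vecTail d)
    simp only [Matrix.vecTail, Function.comp_def] at htail
    rw [ιMulti_succ_apply, ιMulti_succ_apply, ι_mul_ι_mul_anticomm, ι_mul_ι_mul_anticomm y (r 0)]
    simp only [Matrix.vecTail, Function.comp_def]
    rw [htail, map_sub, map_smul, sub_mul, smul_mul_assoc, ← mul_assoc (ι R y), ι_sq_zero,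
      zero_mul, smul_zero, sub_zero]

end

lemma exists_ιMulti_eq_ι_mul_ιMulti {K M : Type*} [Field K] [AddCommGroup M] [Module K M]
    {k : ℕ} (φ : Module.Dual K M) (u : Fin (k + 1) → M) (j₀ : Fin (k + 1))
    (hj₀ : φ (u j₀) ≠ 0) :
    ∃ (v : M) (w : Fin k → M), φ v ≠ 0 ∧ (∀ i, φ (w i) = 0) ∧
      (∀ i, w i ∈ Submodule.span K (Set.range u)) ∧
      ιMulti K (k + 1) u = ι K v * ιMulti K k w := by
  obtain ⟨ε, hε, hswap⟩ :
      ∃ ε : K, ε ≠ 0 ∧ ιMulti K (k + 1) u = ε • ιMulti K (k + 1) (u ∘ Equiv.swap 0 j₀) := by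
    rcases eq_or_ne 0 j₀ with rfl | h
    · exact ⟨1, one_ne_zero, by simp⟩
    · exact ⟨-1, by simp, by rw [AlternatingMap.map_swap _ _ h, neg_one_smul, neg_neg]⟩
  set r : Fin k → M := fun i => u (Equiv.swap 0 j₀ i.succ)
  refine ⟨ε • u j₀, fun i => r i - (φ (r i) / φ (u j₀)) • u j₀, ?_, fun i => ?_, fun i => ?_, ?_⟩
  · simpa using ⟨hε, hj₀⟩
  · simp [div_mul_cancel₀ _ hj₀]
  · exact Submodule.sub_mem _ (Submodule.subset_span ⟨_, rfl⟩)
      (Submodule.smul_mem _ _ (Submodule.subset_span ⟨_, rfl⟩))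
  · rw [map_smul, smul_mul_assoc, ι_mul_ιMulti_sub_smul, hswap, ιMulti_succ_apply]
    simp [r, Matrix.vecTail, Function.comp_def]

lemma Finset.orderEmbOfFin_insert_eq_snoc {α : Type*} [LinearOrder α] {k : ℕ} {B : Finset α}
    (hB : B.card = k) {a : α} (hBa : ∀ b ∈ B, b < a) (h : (insert a B).card = k + 1) :
    ⇑((insert a B).orderEmbOfFin h) = Fin.snoc (α := fun _ => α) (B.orderEmbOfFin hB) a := by
  refine (Finset.orderEmbOfFin_unique h (fun i => ?_) ?_).symm
  · induction i using Fin.lastCases <;> simp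
  · intro i j hij
    induction j using Fin.lastCases with
    | last =>
      induction i using Fin.lastCases with
      | last => exact absurd hij (lt_irrefl _)
      | cast i => simpa using hBa _ (B.orderEmbOfFin_mem hB i)
    | cast j =>
      induction i using Fin.lastCases with
      | last => exact absurd hij (Fin.castSucc_lt_last j).not_gt
      | cast i => simpa using hij

def stdBasis (n k : ℕ) :
    Module.Basis {A : Finset (Fin n) // A.card = k} ℝ (⋀[ℝ]^k (Fin n → ℝ)) :=
  ((Pi.basisFun ℝ (Fin n)).exteriorPower k).reindex
    (Equiv.subtypeEquivRight fun _ => Set.powersetCard.mem_iff)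

section

variable {n k : ℕ}

lemma stdBasis_apply (A : {A : Finset (Fin n) // A.card = k}) :
    stdBasis n k A =
      exteriorPower.ιMulti ℝ k (fun j => Pi.single (A.1.orderEmbOfFin A.2 j) 1) := by
  simp [stdBasis, exteriorPower.ιMulti_family, Function.comp_def,
    Set.powersetCard.ofFinEmbEquiv_symm_apply]

lemma coe_stdBasis (A : {A : Finset (Fin n) // A.card = k}) :
    (stdBasis n k A : ExteriorAlgebra ℝ (Fin n → ℝ)) = eWedge n A.1 := by
  rw [stdBasis_apply, exteriorPower.ιMulti_apply_coe, ιMulti_apply, eWedge,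
    ← Finset.listMap_orderEmbOfFin_finRange A.1 A.2, List.map_map, List.ofFn_eq_map]
  rfl

lemma stdBasis_repr_ιMulti (u : Fin k → Fin n → ℝ) (A : {A : Finset (Fin n) // A.card = k}) :
    (stdBasis n k).repr (exteriorPower.ιMulti ℝ k u) A =
      (Matrix.of fun i j => u i (A.1.orderEmbOfFin A.2 j)).det := by
  simp [stdBasis, exteriorPower.basis_repr_apply, Set.powersetCard.ofFinEmbEquiv_symm_apply]

lemma hasCoords_iff {ω : ⋀[ℝ]^k (Fin n → ℝ)} {c : {A : Finset (Fin n) // A.card = k} → ℝ} :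
    HasCoords ω c ↔ c = (stdBasis n k).repr ω := by
  simp_rw [HasCoords, ← coe_stdBasis, ← Submodule.coe_smul, ← Submodule.coe_sum, Subtype.coe_inj,
    ← Module.Basis.equivFun_symm_apply, LinearEquiv.eq_symm_apply, Module.Basis.equivFun_apply,
    eq_comm]

lemma isNonneg_iff {ω : ⋀[ℝ]^k (Fin n → ℝ)} :
    IsNonneg ω ↔ ∀ A, 0 ≤ (stdBasis n k).repr ω A := by
  simp [IsNonneg, hasCoords_iff]

lemma IsNormalized.ne_zero {ω : ⋀[ℝ]^k (Fin n → ℝ)} (h : IsNormalized ω) : ω ≠ 0 := by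
  rintro rfl
  obtain ⟨c, hc, hsum⟩ := h
  simp [hasCoords_iff.1 hc] at hsum

lemma stdBasis_repr_ιMulti_eq_zero {u : Fin k → Fin n → ℝ}
    {A : {A : Finset (Fin n) // A.card = k}} {a : Fin n} (ha : a ∈ A.1) (hu : ∀ j, u j a = 0) :
    (stdBasis n k).repr (exteriorPower.ιMulti ℝ k u) A = 0 := by
  obtain ⟨r, hr⟩ : a ∈ Set.range (A.1.orderEmbOfFin A.2) := by simpa using ha
  rw [stdBasis_repr_ιMulti]
  exact Matrix.det_eq_zero_of_column_eq_zero r fun j => by simp [hr, hu]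

lemma stdBasis_repr_ιMulti_cons {v : Fin n → ℝ} {w : Fin k → Fin n → ℝ} {a : Fin n}
    (hw : ∀ j, w j a = 0) (A : {A : Finset (Fin n) // A.card = k + 1})
    (B : {B : Finset (Fin n) // B.card = k}) (hAB : A.1 = insert a B.1) (hBa : ∀ b ∈ B.1, b < a) :
    (stdBasis n (k + 1)).repr (exteriorPower.ιMulti ℝ (k + 1) (Fin.cons v w)) A =
      (-1) ^ k * v a * (stdBasis n k).repr (exteriorPower.ιMulti ℝ k w) B := by
  obtain ⟨A, hA⟩ := A
  obtain rfl : A = insert a B.1 := hAB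
  simp_rw [stdBasis_repr_ιMulti, Finset.orderEmbOfFin_insert_eq_snoc B.2 hBa]
  rw [Matrix.det_succ_column _ (Fin.last k), Fin.sum_univ_succ,
    Finset.sum_eq_zero fun i _ => by simp [hw]]
  simp [Matrix.submatrix]

lemma exists_ι_mul_smul_ιMulti_eq_of_isNonneg (u : Fin (k + 1) → Fin n → ℝ)
    (hu : exteriorPower.ιMulti ℝ (k + 1) u ≠ 0)
    (hnn : IsNonneg (exteriorPower.ιMulti ℝ (k + 1) u)) :
    ∃ (v : Fin n → ℝ) (c : ℝ) (w : Fin k → Fin n → ℝ), IsNonneg (c • exteriorPower.ιMulti ℝ k w) ∧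
      ι ℝ v * ↑(c • exteriorPower.ιMulti ℝ k w) = ιMulti ℝ (k + 1) u := by
  have hsupp : (Finset.univ.filter fun i => ∃ j, u j i ≠ 0).Nonempty := by
    by_contra h
    simp only [Finset.not_nonempty_iff_eq_empty, Finset.filter_eq_empty_iff, Finset.mem_univ,
      not_exists, not_not, true_implies] at h
    exact hu (AlternatingMap.map_coord_zero _ 0 (funext fun _ => h 0))
  set a := Finset.max' _ hsupp
  obtain ⟨j₀, hj₀⟩ : ∃ j, u j a ≠ 0 := (Finset.mem_filter.1 (Finset.max'_mem _ hsupp)).2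
  obtain ⟨v, w, hva, hwa, hw_span, huvw⟩ :=
    exists_ιMulti_eq_ι_mul_ιMulti (LinearMap.proj a) u j₀ hj₀
  have hu_gt : ∀ i, a < i →
      Set.range u ⊆ LinearMap.ker (LinearMap.proj i : (Fin n → ℝ) →ₗ[ℝ] ℝ) := by
    rintro i hi _ ⟨j, rfl⟩
    by_contra h
    exact hi.not_ge (Finset.le_max' _ i (Finset.mem_filter.2 ⟨Finset.mem_univ _, j, h⟩))
  have hw_gt : ∀ j i, a < i → w j i = 0 := fun j i hi =>
    Submodule.span_le.2 (hu_gt i hi) (hw_span j)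
  set c : ℝ := (-1) ^ k * v a
  have hc : c ≠ 0 := mul_ne_zero (pow_ne_zero _ (by norm_num)) hva
  have hcons : exteriorPower.ιMulti ℝ (k + 1) u = exteriorPower.ιMulti ℝ (k + 1) (Fin.cons v w) :=
    Subtype.ext (by simp [huvw, Matrix.vecTail, Function.comp_def])
  refine ⟨c⁻¹ • v, c, w, isNonneg_iff.2 fun B => ?_, ?_⟩
  · rw [map_smul, Finsupp.smul_apply, smul_eq_mul]
    by_cases hB : ∃ i ∈ B.1, a ≤ i
    · obtain ⟨i, hi, hai⟩ := hB
      rw [stdBasis_repr_ιMulti_eq_zero hi fun j => hai.eq_or_lt.elim (· ▸ hwa j) (hw_gt j i),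
        mul_zero]
    · simp only [not_exists, not_and, not_le] at hB
      have hA : (insert a B.1).card = k + 1 := by
        rw [Finset.card_insert_of_notMem fun h => (hB a h).false, B.2]
      rw [← stdBasis_repr_ιMulti_cons hwa ⟨_, hA⟩ B rfl hB, ← hcons]
      exact isNonneg_iff.1 hnn _
  · rw [map_smul, Submodule.coe_smul, smul_mul_smul_comm, inv_mul_cancel₀ hc, one_smul, huvw]
    rfl

lemma isDecomposable_smul_ιMulti (c : ℝ) (w : Fin (k + 1) → Fin n → ℝ) :
    IsDecomposable (c • exteriorPower.ιMulti ℝ (k + 1) w) :=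
  ⟨Function.update w 0 (c • w 0), by
    rw [AlternatingMap.map_update_smul, Function.update_eq_self]; rfl⟩

end

theorem nonneg_contains_nonneg_hyperplane_general (n k : ℕ) (hk : 1 ≤ k)
    (ω : ⋀[ℝ]^k (Fin n → ℝ))
    (hnn : IsNonneg ω) (hdec : IsDecomposable ω) (hnorm : IsNormalized ω) :
    ∃ (η : ⋀[ℝ]^(k-1) (Fin n → ℝ)) (v : Fin n → ℝ),
      η ≠ 0 ∧ IsNonneg η ∧ IsDecomposable η ∧
      ι ℝ v * (η : ExteriorAlgebra ℝ (Fin n → ℝ)) = (ω : ExteriorAlgebra ℝ (Fin n → ℝ)) := by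
  obtain ⟨k, rfl⟩ : ∃ k', k = k' + 1 := ⟨k - 1, by omega⟩
  obtain ⟨u, hu⟩ := hdec
  obtain rfl : ω = exteriorPower.ιMulti ℝ (k + 1) u := Subtype.ext hu
  rcases k with _ | k
  · refine ⟨exteriorPower.ιMulti ℝ 0 ![], u 0, fun h => ?_, ?_, ⟨![], rfl⟩, by simp⟩
    · simpa using congrArg Subtype.val h
    · exact isNonneg_iff.2 fun A => by simp [stdBasis_repr_ιMulti]
  · obtain ⟨v, c, w, hη, hvη⟩ := exists_ι_mul_smul_ιMulti_eq_of_isNonneg u hnorm.ne_zero hnn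
    refine ⟨c • exteriorPower.ιMulti ℝ (k + 1) w, v, fun h => hnorm.ne_zero ?_, hη,
      isDecomposable_smul_ιMulti c w, hvη⟩
    rw [h] at hvη
    exact Subtype.ext (by simpa using hvη.symm)

/-- Lemma 1.1 (first part): a nonnegative, decomposable, normalized element
`ω ∈ Λᵏ(ℝⁿ)` contains a nonzero nonnegative decomposable `(k-1)`-vector `η`,
i.e. `v ∧ η = ω` for some vector `v`. -/
theorem nonneg_contains_nonneg_hyperplane (n k : ℕ) (hk : 1 ≤ k) (hkn : k ≤ n)
    (ω : ⋀[ℝ]^k (Fin n → ℝ))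
    (hnn : IsNonneg ω) (hdec : IsDecomposable ω) (hnorm : IsNormalized ω) :
    ∃ (η : ⋀[ℝ]^(k-1) (Fin n → ℝ)) (v : Fin n → ℝ),
      η ≠ 0 ∧ IsNonneg η ∧ IsDecomposable η ∧
      ι ℝ v * (η : ExteriorAlgebra ℝ (Fin n → ℝ)) = (ω : ExteriorAlgebra ℝ (Fin n → ℝ)) :=
  nonneg_contains_nonneg_hyperplane_general n k hk ω hnn hdec hnorm
end
end

section
/- Let 0 ≤ k < n and let ω be a positive, decomposable, normalized element of Λᵏ(ℝⁿ). Then there exists a vector v ∈ ℝⁿ such that v ∧ ω is a positive element of Λᵏ⁺¹(ℝⁿ). -/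
open ExteriorAlgebra

noncomputable section

/-!
Write `ω = ∑ c_A e_A`. The coordinate of `v ∧ ω` at a `(k+1)`-set `B` is
`∑_{i ∈ B} (-1)^#{j ∈ B | j < i} v_i c_{B \ i}`. For `v_i = t^(n-1-i)` this is a sum of
powers of `t` whose leading term comes from `i = min B`, where the sign is `+` and
`c_{B \ min B} > 0`. So every coordinate is positive once `t` is large, and one `t` serves
the finitely many `B`.
-/

open Filter Asymptotics Finset

theorem ExteriorAlgebra.ι_mul_mem_exteriorPower {R M : Type*} [CommRing R] [AddCommGroup M]
    [Module R M] (v : M) {k : ℕ} {x : ExteriorAlgebra R M} (hx : x ∈ ⋀[R]^k M) :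
    ι R v * x ∈ ⋀[R]^(k + 1) M := by
  rw [add_comm]
  exact SetLike.mul_mem_graded (by simp) hx

theorem eventually_pos_sum_mul_pow {ι : Type*} (S : Finset ι) (a : ι → ℝ) (e : ι → ℕ)
    {m : ι} (hm : m ∈ S) (he : ∀ i ∈ S, i ≠ m → e i < e m) (ha : 0 < a m) :
    ∀ᶠ t in atTop, 0 < ∑ i ∈ S, a i * t ^ e i := by
  classical
  have hlower :
      (fun t : ℝ => ∑ i ∈ S.erase m, a i * t ^ e i) =o[atTop] fun t => a m * t ^ e m :=
    IsLittleO.fun_sum fun i hi =>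
      ((isLittleO_pow_pow_atTop_of_lt (he i (mem_of_mem_erase hi) (ne_of_mem_erase hi))
        ).const_mul_left (a i)).const_mul_right ha.ne'
  have hequiv : (fun t : ℝ => ∑ i ∈ S, a i * t ^ e i) ~[atTop] fun t => a m * t ^ e m := by
    refine (hlower.add_isEquivalent IsEquivalent.refl).congr_left (.of_forall fun t => ?_)
    exact sum_erase_add S _ hm
  exact hequiv.eventually_pos
    ((eventually_gt_atTop 0).mono fun t ht => mul_pos ha (pow_pos ht _))

theorem sum_subtype_card_eq {α M : Type*} [Fintype α] [AddCommMonoid M] (k : ℕ)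
    (f : Finset α → M) : ∑ A : {A : Finset α // #A = k}, f A = ∑ A ∈ powersetCard k univ, f A :=
  (sum_subtype _ (by simp) f).symm

section

variable {n : ℕ}

theorem eWedge_insert_of_forall_lt {a : Fin n} {A : Finset (Fin n)} (h : ∀ b ∈ A, a < b) :
    eWedge n (insert a A) = ι ℝ (Pi.single a 1) * eWedge n A := by
  rw [eWedge, sort_insert _ (fun b hb => (h b hb).le) fun ha => lt_irrefl a (h a ha)]
  rfl

theorem ι_single_mul_eWedge (i : Fin n) (A : Finset (Fin n)) :
    ι ℝ (Pi.single i 1) * eWedge n A =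
      if i ∈ A then 0 else (-1 : ℝ) ^ #{j ∈ A | j < i} • eWedge n (insert i A) := by
  induction A using Finset.induction_on_min with
  | empty =>
    have h := eWedge_insert_of_forall_lt (a := i) (A := ∅) (by simp)
    simp_all [eWedge]
  | insert a A ha ih =>
    rw [eWedge_insert_of_forall_lt ha, ← mul_assoc]
    rcases lt_trichotomy i a with hia | rfl | hai
    · have hi : ∀ b ∈ insert a A, i < b := by
        simpa [hia] using fun b hb => hia.trans (ha b hb)
      rw [if_neg fun h => lt_irrefl i (hi i h), filter_false_of_mem fun b hb => (hi b hb).not_gt,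
        eWedge_insert_of_forall_lt hi, eWedge_insert_of_forall_lt ha]
      simp [mul_assoc]
    · simp
    · have hswap : ι ℝ (Pi.single i 1 : Fin n → ℝ) * ι ℝ (Pi.single a 1 : Fin n → ℝ) =
          -(ι ℝ (Pi.single a 1 : Fin n → ℝ) * ι ℝ (Pi.single i 1 : Fin n → ℝ)) :=
        eq_neg_of_add_eq_zero_left (ι_add_mul_swap _ _)
      have hcount : #{j ∈ insert a A | j < i} = #{j ∈ A | j < i} + 1 := by
        rw [filter_insert, if_pos hai,
          card_insert_of_notMem fun h => lt_irrefl a (ha a (mem_filter.1 h).1)]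
      rw [hswap, neg_mul, mul_assoc, ih]
      by_cases hiA : i ∈ A
      · simp [hiA]
      · have hmin : ∀ b ∈ insert i A, a < b := by simpa [hai] using ha
        rw [if_neg hiA, if_neg (by simp [hai.ne', hiA]), mul_smul_comm,
          ← eWedge_insert_of_forall_lt hmin, insert_comm, hcount, pow_succ]
        simp

theorem ι_eq_sum_smul_ι_single (v : Fin n → ℝ) :
    ι ℝ v = ∑ i, v i • ι ℝ (Pi.single i (1 : ℝ)) := by
  conv_lhs => rw [← univ_sum_single v]
  simp [map_sum, ← map_smul, ← Pi.single_smul]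

def wedgeCoeff (c : Finset (Fin n) → ℝ) (v : Fin n → ℝ) (B : Finset (Fin n)) : ℝ :=
  ∑ i ∈ B, (-1) ^ #{j ∈ B | j < i} * v i * c (B.erase i)

theorem ι_mul_sum_smul_eWedge (k : ℕ) (c : Finset (Fin n) → ℝ) (v : Fin n → ℝ) :
    ι ℝ v * ∑ A ∈ powersetCard k univ, c A • eWedge n A =
      ∑ B ∈ powersetCard (k + 1) univ, wedgeCoeff c v B • eWedge n B := by
  calc ι ℝ v * ∑ A ∈ powersetCard k univ, c A • eWedge n A
      = ∑ i, ∑ A ∈ powersetCard k univ with i ∉ A,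
          ((-1) ^ #{j ∈ A | j < i} * v i * c A) • eWedge n (insert i A) := by
        rw [ι_eq_sum_smul_ι_single, sum_mul]
        refine sum_congr rfl fun i _ => ?_
        rw [mul_sum, sum_filter]
        refine sum_congr rfl fun A _ => ?_
        rw [smul_mul_smul_comm, ι_single_mul_eWedge]
        split_ifs
        · simp
        · rw [smul_smul]
          ring_nf
    _ = ∑ i, ∑ B ∈ powersetCard (k + 1) univ with i ∈ B,
          ((-1) ^ #{j ∈ B | j < i} * v i * c (B.erase i)) • eWedge n B := by
        refine sum_congr rfl fun i _ => sum_nbij' (insert i) (·.erase i) ?_ ?_ ?_ ?_ ?_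
        all_goals intro A hA; simp only [mem_filter, mem_powersetCard_univ] at hA
        · simp [card_insert_of_notMem hA.2, hA.1]
        · simp [card_erase_of_mem hA.2, hA.1]
        · exact erase_insert hA.2
        · exact insert_erase hA.2
        · simp [filter_insert, erase_insert hA.2]
    _ = ∑ B ∈ powersetCard (k + 1) univ, wedgeCoeff c v B • eWedge n B := by
        simp_rw [wedgeCoeff, sum_smul]
        exact sum_comm' fun i B => by simp [and_comm]

theorem exists_forall_wedgeCoeff_pos (k : ℕ) (c : Finset (Fin n) → ℝ)
    (hc : ∀ A, #A = k → 0 < c A) : ∃ v : Fin n → ℝ, ∀ B, #B = k + 1 → 0 < wedgeCoeff c v B := by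
  have hB : ∀ B ∈ powersetCard (k + 1) univ,
      ∀ᶠ t : ℝ in atTop, 0 < wedgeCoeff c (fun i => t ^ (i.rev : ℕ)) B := by
    intro B hB
    rw [mem_powersetCard_univ] at hB
    have hne : B.Nonempty := card_pos.1 (by omega)
    refine (eventually_pos_sum_mul_pow B (fun i => (-1) ^ #{j ∈ B | j < i} * c (B.erase i))
      (fun i => i.rev) (B.min'_mem hne) ?_ ?_).mono fun t ht => ?_
    · exact fun i hi hi' => Fin.rev_lt_rev.2 (lt_of_le_of_ne (B.min'_le i hi) (Ne.symm hi'))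
    · rw [filter_false_of_mem fun j hj => not_lt.2 (B.min'_le j hj), card_empty, pow_zero,
        one_mul]
      exact hc _ (by rw [card_erase_of_mem (B.min'_mem hne), hB, Nat.add_sub_cancel])
    · simpa only [wedgeCoeff, mul_right_comm] using ht
  obtain ⟨t, ht⟩ := ((eventually_all_finset _).2 hB).exists
  exact ⟨_, fun B hB => ht B (mem_powersetCard_univ.2 hB)⟩

def extendByZero {k : ℕ} (c : {A : Finset (Fin n) // #A = k} → ℝ) (A : Finset (Fin n)) : ℝ :=
  if h : #A = k then c ⟨A, h⟩ else 0

theorem HasCoords.ι_mul {k : ℕ} {ω : ⋀[ℝ]^k (Fin n → ℝ)}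
    {c : {A : Finset (Fin n) // #A = k} → ℝ} (hω : HasCoords ω c) (v : Fin n → ℝ)
    {η : ⋀[ℝ]^(k + 1) (Fin n → ℝ)}
    (hη : (η : ExteriorAlgebra ℝ (Fin n → ℝ)) = ι ℝ v * ω) :
    HasCoords η fun B => wedgeCoeff (extendByZero c) v B := by
  have hω' : (ω : ExteriorAlgebra ℝ (Fin n → ℝ)) =
      ∑ A ∈ powersetCard k univ, extendByZero c A • eWedge n A := by
    rw [hω, ← sum_subtype_card_eq]
    exact sum_congr rfl fun A _ => by simp [extendByZero, A.2]
  rw [HasCoords, hη, hω', ι_mul_sum_smul_eWedge]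
  exact (sum_subtype_card_eq (k + 1) _).symm

end

theorem pos_contained_in_pos_general (n k : ℕ)
    (ω : ⋀[ℝ]^k (Fin n → ℝ))
    (hpos : IsPositive ω) :
    ∃ (v : Fin n → ℝ) (η : ⋀[ℝ]^(k+1) (Fin n → ℝ)),
      (η : ExteriorAlgebra ℝ (Fin n → ℝ)) =
        ι ℝ v * (ω : ExteriorAlgebra ℝ (Fin n → ℝ)) ∧
      IsPositive η := by
  obtain ⟨c, hω, hc⟩ := hpos
  obtain ⟨v, hv⟩ := exists_forall_wedgeCoeff_pos k (extendByZero c) fun A hA => by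
    simpa [extendByZero, hA] using hc ⟨A, hA⟩
  exact ⟨v, ⟨ι ℝ v * ω, ι_mul_mem_exteriorPower v ω.2⟩, rfl, _, hω.ι_mul v rfl,
    fun B => hv B B.2⟩

/-- Lemma 1.2 (second part): a positive, decomposable, normalized element
`ω ∈ Λᵏ(ℝⁿ)` with `k < n` is contained in a positive `(k+1)`-vector,
namely `v ∧ ω` for a suitable vector `v`. -/
theorem pos_contained_in_pos (n k : ℕ) (hkn : k < n)
    (ω : ⋀[ℝ]^k (Fin n → ℝ))
    (hpos : IsPositive ω) (hdec : IsDecomposable ω) (hnorm : IsNormalized ω) :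
    ∃ (v : Fin n → ℝ) (η : ⋀[ℝ]^(k+1) (Fin n → ℝ)),
      (η : ExteriorAlgebra ℝ (Fin n → ℝ)) =
        ι ℝ v * (ω : ExteriorAlgebra ℝ (Fin n → ℝ)) ∧
      IsPositive η :=
  pos_contained_in_pos_general n k ω hpos
end
end

section
/- Let l ≥ 1, let HB = { (t,x) ∈ ℝ × ℝ^{l−1} : t ≥ 0, t² + |x|² ≤ 1 } be the closed l-dimensional half ball and HBB = { (0,x) : |x| ≤ 1 } its bottom. Let E and F be topological spaces with subsets EB ⊆ E and FB ⊆ F, and suppose there are homeomorphisms f : E → HB and g : F → HB with f(EB) = HBB and g(FB) = HBB. Let φ : EB → FB be a homeomorphism, and let X be the quotient of the disjoint union E ⊔ F by the identification of each x ∈ EB with φ(x) ∈ FB. Then X is homeomorphic to the closed unit ball in ℝˡ. -/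
/-!
Send `E` by `f` onto the upper half of the unit ball and `F` by `g`, followed by the reflection
`t ↦ -t`, onto the lower half. This identifies `x ∈ EB` with `y ∈ FB` exactly when `f x = g y`,
which in general is not the gluing by `φ`. The mismatch on the flat face is a self-homeomorphism
of the unit disk; it extends to a height-preserving self-homeomorphism of the half ball by
rescaling it on every horizontal slice. Precomposing `g` with that extension makes the two
identifications agree, and a continuous bijection from the compact glued space onto the Hausdorff
ball is a homeomorphism.
-/

/-- The relation on `E ⊕ F` identifying each point `x` of `EB` with `φ x ∈ FB`. -/
def glueRel {E F : Type*} (EB : Set E) (FB : Set F) (φ : EB → FB) :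
    E ⊕ F → E ⊕ F → Prop :=
  fun p q => ∃ x : EB, p = Sum.inl (x : E) ∧ q = Sum.inr ((φ x : FB) : F)

open Metric Set Filter Topology

section HalfBall

variable (V : Type*) [NormedAddCommGroup V]

def halfBall : Set (ℝ × V) := {q | 0 ≤ q.1 ∧ q.1 ^ 2 + ‖q.2‖ ^ 2 ≤ 1}

def flatFace : Set (ℝ × V) := {q | q.1 = 0 ∧ ‖q.2‖ ≤ 1}

def l2UnitBall : Set (ℝ × V) := {q | q.1 ^ 2 + ‖q.2‖ ^ 2 ≤ 1}

variable {V}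

lemma isCompact_halfBall [ProperSpace V] : IsCompact (halfBall V) := by
  refine isCompact_of_isClosed_isBounded ?_ ((isBounded_closedBall (x := 0) (r := 1)).subset ?_)
  · exact (isClosed_le continuous_const continuous_fst).inter
      (isClosed_le ((continuous_fst.pow 2).add (continuous_snd.norm.pow 2)) continuous_const)
  · rintro ⟨t, x⟩ ⟨ht, hq⟩
    simp only [mem_closedBall_zero_iff, Prod.norm_def, Real.norm_eq_abs, abs_of_nonneg ht]
    exact max_le (by nlinarith [norm_nonneg x]) (by nlinarith [norm_nonneg x])

instance [ProperSpace V] : CompactSpace (halfBall V) :=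
  isCompact_iff_compactSpace.mp isCompact_halfBall

lemma fst_sq_le_one {q : ℝ × V} (hq : q.1 ^ 2 + ‖q.2‖ ^ 2 ≤ 1) : q.1 ^ 2 ≤ 1 := by
  nlinarith [norm_nonneg q.2]

def toFlatFace (w : closedBall (0 : V) 1) : halfBall V :=
  ⟨(0, w), le_rfl, by nlinarith [mem_closedBall_zero_iff.1 w.2, norm_nonneg (w : V)]⟩

lemma continuous_toFlatFace : Continuous (toFlatFace : closedBall (0 : V) 1 → halfBall V) :=
  (continuous_const.prodMk continuous_subtype_val).subtype_mk _

lemma mem_flatFace_iff {z : halfBall V} : (z : ℝ × V) ∈ flatFace V ↔ z.1.1 = 0 := by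
  refine ⟨And.left, fun h => ⟨h, ?_⟩⟩
  nlinarith [z.2.2, norm_nonneg z.1.2]

lemma toFlatFace_mem_flatFace (w : closedBall (0 : V) 1) :
    (toFlatFace w : ℝ × V) ∈ flatFace V :=
  ⟨rfl, mem_closedBall_zero_iff.1 w.2⟩

lemma toFlatFace_snd {z : halfBall V} (hz : (z : ℝ × V) ∈ flatFace V) :
    toFlatFace ⟨z.1.2, mem_closedBall_zero_iff.2 hz.2⟩ = z :=
  Subtype.ext (Prod.ext hz.1.symm rfl)

noncomputable def sliceRadius (t : ℝ) : ℝ := √(1 - t ^ 2)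

lemma sliceRadius_nonneg (t : ℝ) : 0 ≤ sliceRadius t := Real.sqrt_nonneg _

lemma sliceRadius_sq {t : ℝ} (ht : t ^ 2 ≤ 1) : sliceRadius t ^ 2 = 1 - t ^ 2 :=
  Real.sq_sqrt (by linarith)

lemma norm_le_sliceRadius {q : ℝ × V} (hq : q.1 ^ 2 + ‖q.2‖ ^ 2 ≤ 1) :
    ‖q.2‖ ≤ sliceRadius q.1 :=
  Real.le_sqrt_of_sq_le (by linarith)

variable [NormedSpace ℝ V]

lemma smul_mem_halfBall {t : ℝ} {u : V} (ht₀ : 0 ≤ t) (ht₁ : t ^ 2 ≤ 1)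
    (hu : ‖u‖ ≤ 1) :
    (t, sliceRadius t • u) ∈ halfBall V := by
  refine ⟨ht₀, ?_⟩
  rw [norm_smul, Real.norm_of_nonneg (sliceRadius_nonneg _), mul_pow, sliceRadius_sq ht₁]
  nlinarith [pow_le_one₀ (norm_nonneg u) hu (n := 2)]

lemma inv_sliceRadius_smul_mem_closedBall (z : halfBall V) :
    (sliceRadius z.1.1)⁻¹ • z.1.2 ∈ closedBall (0 : V) 1 := by
  rw [mem_closedBall_zero_iff, norm_smul, norm_inv, Real.norm_of_nonneg (sliceRadius_nonneg _)]
  exact inv_mul_le_one_of_le₀ (norm_le_sliceRadius z.2.2) (sliceRadius_nonneg _)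

/-- The slice at height `t`, a ball of radius `sliceRadius t`, is rescaled to the unit ball, mapped
by `ψ` and scaled back. At `t = 1` the slice is a point and the junk value
`(sliceRadius 1)⁻¹ = 0` is harmless. -/
noncomputable def coneExtension (ψ : closedBall (0 : V) 1 → closedBall (0 : V) 1)
    (z : halfBall V) : halfBall V :=
  ⟨_, smul_mem_halfBall z.2.1 (fst_sq_le_one z.2.2)
    (mem_closedBall_zero_iff.1 (ψ ⟨_, inv_sliceRadius_smul_mem_closedBall z⟩).2)⟩

variable {ψ ψ' : closedBall (0 : V) 1 → closedBall (0 : V) 1}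

lemma coneExtension_toFlatFace (w : closedBall (0 : V) 1) :
    coneExtension ψ (toFlatFace w) = toFlatFace (ψ w) := by
  have h : sliceRadius 0 = 1 := by simp [sliceRadius]
  apply Subtype.ext
  simp [coneExtension, toFlatFace, h]

lemma coneExtension_leftInverse (h : Function.LeftInverse ψ' ψ) :
    Function.LeftInverse (coneExtension ψ') (coneExtension ψ) := by
  rintro ⟨⟨t, x⟩, hz⟩
  refine Subtype.ext (Prod.ext rfl ?_)
  by_cases hs : sliceRadius t = 0
  · have hx : x = 0 := norm_le_zero_iff.1 (hs ▸ norm_le_sliceRadius hz.2)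
    simp [coneExtension, hs, hx]
  · simp [coneExtension, inv_smul_smul₀ hs, h _, smul_inv_smul₀ hs]

lemma continuous_coneExtension (hψ : Continuous ψ) : Continuous (coneExtension ψ) := by
  have hs : Continuous fun z : halfBall V => sliceRadius z.1.1 := by
    unfold sliceRadius
    fun_prop
  refine ((continuous_fst.comp continuous_subtype_val).prodMk ?_).subtype_mk _
  refine continuous_iff_continuousAt.2 fun z₀ => ?_
  by_cases h₀ : sliceRadius z₀.1.1 = 0
  · have hψ_bdd : ∀ z : halfBall V,
        ‖(ψ ⟨_, inv_sliceRadius_smul_mem_closedBall z⟩ : V)‖ ≤ 1 :=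
      fun z => mem_closedBall_zero_iff.1 (ψ _).2
    show Tendsto _ (𝓝 z₀) (𝓝 (sliceRadius z₀.1.1 • _))
    simp only [h₀, zero_smul]
    exact (h₀ ▸ hs.tendsto z₀).zero_smul_isBoundedUnder_le
      (isBoundedUnder_of ⟨1, hψ_bdd⟩)
  · have hinner : ContinuousAt (fun z : halfBall V =>
        (⟨_, inv_sliceRadius_smul_mem_closedBall z⟩ : closedBall (0 : V) 1)) z₀ :=
      ((hs.continuousAt.inv₀ h₀).smul (by fun_prop)).codRestrict _
    exact hs.continuousAt.smul (continuous_subtype_val.continuousAt.comp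
      (hψ.continuousAt.comp hinner))

noncomputable def coneExtensionHomeomorph
    (ψ : closedBall (0 : V) 1 ≃ₜ closedBall (0 : V) 1) : halfBall V ≃ₜ halfBall V where
  toFun := coneExtension ψ
  invFun := coneExtension ψ.symm
  left_inv := coneExtension_leftInverse ψ.symm_apply_apply
  right_inv := coneExtension_leftInverse ψ.apply_symm_apply
  continuous_toFun := continuous_coneExtension ψ.continuous
  continuous_invFun := continuous_coneExtension ψ.symm.continuous

end HalfBall

theorem Quot.nonempty_homeomorph_of_surjective {X Y : Type*} [TopologicalSpace X]
    [CompactSpace X] [TopologicalSpace Y] [T2Space Y] {r : X → X → Prop} {h : X → Y}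
    (hc : Continuous h) (hs : Function.Surjective h) (hr : ∀ a b, r a b → h a = h b)
    (hfiber : ∀ a b, h a = h b → Quot.mk r a = Quot.mk r b) : Nonempty (Quot r ≃ₜ Y) := by
  have hinj : Function.Injective (Quot.lift h hr) := by
    rintro ⟨a⟩ ⟨b⟩ hab
    exact hfiber a b hab
  exact ⟨(continuous_quot_lift hr hc).homeoOfEquivCompactToT2
    (f := Equiv.ofBijective _ ⟨hinj, (Quot.surjective_lift hr).2 hs⟩)⟩

section Gluing

variable {V : Type*} [NormedAddCommGroup V] {E F : Type*} [TopologicalSpace E]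
  [TopologicalSpace F] {EB : Set E} {FB : Set F}

def faceHomeomorph (f : E ≃ₜ halfBall V)
    (hf : ∀ x, (f x : ℝ × V) ∈ flatFace V ↔ x ∈ EB) : EB ≃ₜ closedBall (0 : V) 1 where
  toFun x := ⟨(f x).1.2, mem_closedBall_zero_iff.2 ((hf x).2 x.2).2⟩
  invFun w := ⟨f.symm (toFlatFace w),
    (hf _).1 (by rw [f.apply_symm_apply]; exact toFlatFace_mem_flatFace w)⟩
  left_inv x := Subtype.ext (f.symm_apply_eq.2 (toFlatFace_snd ((hf x).2 x.2)))
  right_inv w := by simp [toFlatFace]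
  continuous_toFun := by fun_prop
  continuous_invFun := (f.symm.continuous.comp continuous_toFlatFace).subtype_mk _

lemma toFlatFace_faceHomeomorph (f : E ≃ₜ halfBall V)
    (hf : ∀ x, (f x : ℝ × V) ∈ flatFace V ↔ x ∈ EB) (x : EB) :
    toFlatFace (faceHomeomorph f hf x) = f x :=
  toFlatFace_snd ((hf x).2 x.2)

def glueMap (f : E ≃ₜ halfBall V) (g : F ≃ₜ halfBall V) : E ⊕ F → l2UnitBall V :=
  Sum.elim (fun x => ⟨f x, (f x).2.2⟩)
    (fun y => ⟨(-(g y).1.1, (g y).1.2), by simpa [l2UnitBall] using (g y).2.2⟩)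

variable (f : E ≃ₜ halfBall V) (g : F ≃ₜ halfBall V)

lemma continuous_glueMap : Continuous (glueMap f g) := by
  unfold glueMap
  fun_prop

lemma surjective_glueMap : Function.Surjective (glueMap f g) := by
  rintro ⟨⟨t, x⟩, hq⟩
  rcases le_total 0 t with ht | ht
  · exact ⟨.inl (f.symm ⟨(t, x), ht, hq⟩), by simp [glueMap]⟩
  · refine ⟨.inr (g.symm ⟨(-t, x), neg_nonneg.2 ht, by simpa [l2UnitBall] using hq⟩), ?_⟩
    simp [glueMap]

lemma glueMap_inl_eq_inr_iff {x : E} {y : F} :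
    glueMap f g (.inl x) = glueMap f g (.inr y) ↔
      (f x : ℝ × V) ∈ flatFace V ∧ f x = g y := by
  rw [mem_flatFace_iff]
  have hx := (f x).2.1
  have hy := (g y).2.1
  simp only [glueMap, Sum.elim_inl, Sum.elim_inr, Subtype.ext_iff, Prod.ext_iff]
  constructor
  · rintro ⟨h₁, h₂⟩
    exact ⟨by linarith, by linarith, h₂⟩
  · rintro ⟨h₀, h₁, h₂⟩
    exact ⟨by linarith, h₂⟩

theorem nonempty_homeomorph_glueRel_l2UnitBall [ProperSpace V] (φ : EB → FB)
    (hf : ∀ x, (f x : ℝ × V) ∈ flatFace V ↔ x ∈ EB) (hfg : ∀ x : EB, g (φ x) = f x) :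
    Nonempty (Quot (glueRel EB FB φ) ≃ₜ l2UnitBall V) := by
  have : CompactSpace E := f.symm.compactSpace
  have : CompactSpace F := g.symm.compactSpace
  have glued : ∀ x y, glueMap f g (.inl x) = glueMap f g (.inr y) →
      Quot.mk (glueRel EB FB φ) (.inl x) = Quot.mk _ (.inr y) := by
    intro x y h
    obtain ⟨hx, hxy⟩ := (glueMap_inl_eq_inr_iff f g).1 h
    have hφ : (φ ⟨x, (hf x).1 hx⟩ : F) = y := g.injective ((hfg _).trans hxy)
    exact Quot.sound ⟨⟨x, (hf x).1 hx⟩, rfl, by rw [hφ]⟩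
  refine Quot.nonempty_homeomorph_of_surjective (continuous_glueMap f g)
    (surjective_glueMap f g) ?_ ?_
  · rintro _ _ ⟨x, rfl, rfl⟩
    exact (glueMap_inl_eq_inr_iff f g).2 ⟨(hf x).2 x.2, (hfg x).symm⟩
  · rintro (x | y) (x' | y') h
    · obtain rfl : x = x' :=
        f.injective (Subtype.ext (by simpa [glueMap, Subtype.ext_iff] using h))
      rfl
    · exact glued x y' h
    · exact (glued x' y h.symm).symm
    · obtain rfl : y = y' := g.injective (Subtype.ext (Prod.ext_iff.2
        (by simpa [glueMap, Subtype.ext_iff, Prod.ext_iff] using h)))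
      rfl

variable [NormedSpace ℝ V]

theorem exists_homeomorph_eq_on_face (hf : ∀ x, (f x : ℝ × V) ∈ flatFace V ↔ x ∈ EB)
    (hg : ∀ y, (g y : ℝ × V) ∈ flatFace V ↔ y ∈ FB) (φ : EB ≃ₜ FB) :
    ∃ g' : F ≃ₜ halfBall V, ∀ x : EB, g' (φ x) = f x := by
  let ψ := (faceHomeomorph g hg).symm.trans (φ.symm.trans (faceHomeomorph f hf))
  refine ⟨g.trans (coneExtensionHomeomorph ψ), fun x => ?_⟩
  calc coneExtension ψ (g (φ x))
      = coneExtension ψ (toFlatFace (faceHomeomorph g hg (φ x))) := by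
        rw [toFlatFace_faceHomeomorph]
    _ = toFlatFace (faceHomeomorph f hf x) := by
        rw [coneExtension_toFlatFace]
        simp [ψ]
    _ = f x := toFlatFace_faceHomeomorph f hf x

end Gluing

noncomputable def consHomeomorph (k : ℕ) :
    ℝ × EuclideanSpace ℝ (Fin k) ≃ₜ EuclideanSpace ℝ (Fin (k + 1)) where
  toFun q := WithLp.toLp 2 (Fin.cons q.1 q.2)
  invFun v := (v 0, WithLp.toLp 2 (Fin.tail v))
  left_inv q := by simp
  right_inv v := by simp [Fin.cons_self_tail]
  continuous_toFun := by fun_prop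
  continuous_invFun := by fun_prop

lemma norm_consHomeomorph_sq {k : ℕ} (q : ℝ × EuclideanSpace ℝ (Fin k)) :
    ‖consHomeomorph k q‖ ^ 2 = q.1 ^ 2 + ‖q.2‖ ^ 2 := by
  simp [consHomeomorph, EuclideanSpace.real_norm_sq_eq, Fin.sum_univ_succ]

noncomputable def l2UnitBallHomeomorph (k : ℕ) :
    l2UnitBall (EuclideanSpace ℝ (Fin k)) ≃ₜ
      closedBall (0 : EuclideanSpace ℝ (Fin (k + 1))) 1 :=
  (consHomeomorph k).subtype fun q => by
    rw [mem_closedBall_zero_iff, ← sq_le_one_iff₀ (norm_nonneg _), norm_consHomeomorph_sq]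
    rfl

/-- Corollary 2.2: gluing two `l`-convexoids (spaces homeomorphic to the closed
`l`-dimensional half ball, with bottoms corresponding to the flat face) along a
homeomorphism of their bottoms yields a space homeomorphic to the closed `l`-ball. -/
theorem glue_convexoids_ball (l : ℕ) (hl : 1 ≤ l)
    {E F : Type} [TopologicalSpace E] [TopologicalSpace F]
    (EB : Set E) (FB : Set F)
    (HB : Set (ℝ × EuclideanSpace ℝ (Fin (l - 1))))
    (hHB : HB = {q | 0 ≤ q.1 ∧ q.1 ^ 2 + ‖q.2‖ ^ 2 ≤ 1})
    (HBB : Set (ℝ × EuclideanSpace ℝ (Fin (l - 1))))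
    (hHBB : HBB = {q | q.1 = 0 ∧ ‖q.2‖ ≤ 1})
    (f : E ≃ₜ HB) (hf : ∀ x : E, (f x : ℝ × EuclideanSpace ℝ (Fin (l - 1))) ∈ HBB ↔ x ∈ EB)
    (g : F ≃ₜ HB) (hg : ∀ y : F, (g y : ℝ × EuclideanSpace ℝ (Fin (l - 1))) ∈ HBB ↔ y ∈ FB)
    (φ : EB ≃ₜ FB) :
    Nonempty (Quot (glueRel EB FB φ) ≃ₜ
      (Metric.closedBall (0 : EuclideanSpace ℝ (Fin l)) 1 : Set (EuclideanSpace ℝ (Fin l)))) := by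
  subst hHB hHBB
  obtain ⟨k, rfl⟩ : ∃ k, l = k + 1 := ⟨l - 1, by omega⟩
  obtain ⟨g', hg'⟩ := exists_homeomorph_eq_on_face f g hf hg φ
  obtain ⟨e⟩ := nonempty_homeomorph_glueRel_l2UnitBall f g' φ hf hg'
  exact ⟨e.trans (l2UnitBallHomeomorph k)⟩
end
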